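/- Let p be an odd prime and let F and H be circulant graphs on p vertices, i.e., F = G(ℤ_p, S_F) and H = G(ℤ_p, S_H) for sets S_F, S_H ⊆ ℤ_p \ {0} closed under additive inverses. If F and H are singularly cospectral (the multisets of absolute values of the nonzero eigenvalues, with multiplicity, of their adjacency matrices coincide), then F and H are isomorphic as graphs. -/

import Mathlib

open Polynomial

/-- Adjacency matrix (over ℝ) of the circulant graph `G(ℤ_n, S)`. -/
noncomputable def circAdj (n : ℕ) (S : Finset (ZMod n)) : Matrix (ZMod n) (ZMod n) ℝ :=
  fun i j => if j - i ∈ S then 1 else 0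

/-- Multiset of eigenvalues (with multiplicity) of the circulant graph `G(ℤ_n, S)`. -/
noncomputable def circSpectrum (n : ℕ) [NeZero n] (S : Finset (ZMod n)) : Multiset ℝ :=
  (Matrix.charpoly (circAdj n S)).roots

/-- Multiset of absolute values of the nonzero eigenvalues. -/
noncomputable def absNonzeroSpectrum (n : ℕ) [NeZero n] (S : Finset (ZMod n)) : Multiset ℝ :=
  ((circSpectrum n S).filter (fun x => x ≠ 0)).map (fun x => |x|)

/-- The circulant graph `G(ℤ_n, S)`, for `S ⊆ ℤ_n \ {0}` with `S = -S`. -/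
def circGraph (n : ℕ) (S : Finset (ZMod n)) (hsym : ∀ x : ZMod n, x ∈ S ↔ -x ∈ S)
    (h0 : (0 : ZMod n) ∉ S) : SimpleGraph (ZMod n) where
  Adj i j := j - i ∈ S
  symm := by
    constructor
    intro i j hij
    have := (hsym (j - i)).mp hij
    simpa [neg_sub] using this
  loopless := by
    constructor
    intro i hi
    exact h0 (by simpa using hi)

/-! Writing `ψ` for the standard additive character of `ℤ_p`, the discrete Fourier transform
diagonalises `G(ℤ_p, S)`, whose eigenvalues are the real numbers `λ_k(S) = ∑_{s ∈ S} ψ (k s)`;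
in particular `λ_0(S) = |S|` and `λ_u(S) = ∑_{j ∈ u S} ψ j` for a unit `u`. Since `p` is prime,
the only integer relations among the `ψ j` are the multiples of `∑_j ψ j = 0`. Hence if `F` and
`H` are singularly cospectral and `S_F ≠ ∅`, the nonzero eigenvalue `λ_1(S_F)` equals
`±λ_t(S_H)` for some `t`, and comparing coefficients rules out every case except
`λ_1(S_F) = λ_u(S_H)` with `u` a unit, which forces `S_F = u S_H`; multiplication by `u` is then
an isomorphism `H ≃ F`. -/

open ZMod Matrix
open scoped Pointwise ComplexConjugate

theorem IsPrimitiveRoot.coeff_eq_of_aeval_eq_zero {p : ℕ} (hp : p.Prime) {K : Type*} [Field K]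
    [CharZero K] {ζ : K} (hζ : IsPrimitiveRoot ζ p) {g : ℚ[X]} (hdeg : g.natDegree < p)
    (hg : aeval ζ g = 0) {i j : ℕ} (hi : i < p) (hj : j < p) : g.coeff i = g.coeff j := by
  have hdvd : cyclotomic p ℚ ∣ g := by
    rw [cyclotomic_eq_minpoly_rat hζ hp.pos]
    exact minpoly.dvd ℚ ζ hg
  have hdeg' : g.natDegree ≤ (cyclotomic p ℚ).natDegree := by
    rw [natDegree_cyclotomic, Nat.totient_prime hp]
    omega
  obtain ⟨c, rfl⟩ : ∃ c, g = C c * cyclotomic p ℚ :=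
    ⟨_, eq_leadingCoeff_mul_of_monic_of_dvd_of_natDegree_le (cyclotomic.monic p ℚ) hdvd hdeg'⟩
  have : Fact p.Prime := ⟨hp⟩
  have hcoeff {k : ℕ} (hk : k < p) : (C c * cyclotomic p ℚ).coeff k = c := by
    simp [cyclotomic_prime, finsetSum_coeff, coeff_X_pow, hk]
  rw [hcoeff hi, hcoeff hj]

lemma Finset.zero_notMem_smul_finset {G α : Type*} [Group G] [AddMonoid α] [DecidableEq α]
    [DistribMulAction G α] {S : Finset α} (h0 : (0 : α) ∉ S) (g : G) : (0 : α) ∉ g • S := by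
  rwa [← smul_zero g, Finset.smul_mem_smul_finset_iff]

lemma ZMod.card_ne_one_of_neg_mem_iff {n : ℕ} (hodd : Odd n) {S : Finset (ZMod n)}
    (hsym : ∀ x : ZMod n, x ∈ S ↔ -x ∈ S) (h0 : (0 : ZMod n) ∉ S) : S.card ≠ 1 := by
  intro h
  obtain ⟨x, rfl⟩ := Finset.card_eq_one.mp h
  have hx : -x = x := by simpa using (hsym x).mp (Finset.mem_singleton_self x)
  rcases (ZMod.neg_eq_self_iff x).mp hx with rfl | h2
  · exact h0 (Finset.mem_singleton_self 0)
  · obtain ⟨k, rfl⟩ := hodd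
    omega

def circGraphIsoOfEqSmul {n : ℕ} {S S' : Finset (ZMod n)} (hsym : ∀ x : ZMod n, x ∈ S ↔ -x ∈ S)
    (h0 : (0 : ZMod n) ∉ S) (hsym' : ∀ x : ZMod n, x ∈ S' ↔ -x ∈ S') (h0' : (0 : ZMod n) ∉ S')
    (u : (ZMod n)ˣ) (h : S' = u • S) : circGraph n S hsym h0 ≃g circGraph n S' hsym' h0' where
  toEquiv := MulAction.toPerm u
  map_rel_iff' {a b} := by
    change u • b - u • a ∈ S' ↔ b - a ∈ S
    rw [h, ← smul_sub, Finset.smul_mem_smul_finset_iff]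

section Spectrum

variable {n : ℕ} [NeZero n]

noncomputable def circEigenvalue (S : Finset (ZMod n)) (k : ZMod n) : ℂ :=
  ∑ s ∈ S, stdAddChar (k * s)

lemma circAdj_map_mulVec (S : Finset (ZMod n)) (Φ : ZMod n → ℂ) (i : ZMod n) :
    ((circAdj n S).map (algebraMap ℝ ℂ) *ᵥ Φ) i = ∑ s ∈ S, Φ (i + s) := by
  simp only [mulVec, dotProduct, map_apply, circAdj, apply_ite, map_one, map_zero, ite_mul,
    one_mul, zero_mul]
  rw [← Finset.sum_filter]
  refine Finset.sum_nbij' (· - i) (i + ·) ?_ ?_ ?_ ?_ ?_ <;> simp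

lemma dft_circAdj_map_mulVec (S : Finset (ZMod n)) (Φ : ZMod n → ℂ) (k : ZMod n) :
    𝓕 ((circAdj n S).map (algebraMap ℝ ℂ) *ᵥ Φ) k = circEigenvalue S k * 𝓕 Φ k := by
  simp only [dft_apply, circAdj_map_mulVec, smul_eq_mul, Finset.mul_sum, circEigenvalue,
    Finset.sum_mul]
  rw [Finset.sum_comm, Finset.sum_comm (s := Finset.univ)]
  refine Finset.sum_congr rfl fun s _ => ?_
  rw [← (Equiv.subRight s).sum_comp]
  refine Finset.sum_congr rfl fun i _ => ?_
  rw [Equiv.subRight_apply, sub_add_cancel, ← mul_assoc, ← AddChar.map_add_eq_mul]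
  ring_nf

lemma charpoly_circAdj_map (S : Finset (ZMod n)) :
    ((circAdj n S).map (algebraMap ℝ ℂ)).charpoly = ∏ k, (X - C (circEigenvalue S k)) := by
  have hconj : dft.conj (toLin' ((circAdj n S).map (algebraMap ℝ ℂ)))
      = toLin' (diagonal (circEigenvalue S)) := by
    refine LinearMap.ext fun Ψ => funext fun k => ?_
    simp only [LinearEquiv.conj_apply, LinearMap.comp_apply, LinearEquiv.coe_coe, toLin'_apply]
    rw [dft_circAdj_map_mulVec, LinearEquiv.apply_symm_apply, mulVec_diagonal]
  rw [← charpoly_toLin', ← LinearEquiv.charpoly_conj dft, hconj, charpoly_toLin',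
    charpoly_diagonal]

lemma ofReal_re_circEigenvalue {S : Finset (ZMod n)} (hsym : ∀ x : ZMod n, x ∈ S ↔ -x ∈ S)
    (k : ZMod n) : ((circEigenvalue S k).re : ℂ) = circEigenvalue S k := by
  refine Complex.conj_eq_iff_re.mp ?_
  simp only [circEigenvalue, map_sum, ← AddChar.map_neg_eq_conj, ← mul_neg]
  exact Finset.sum_equiv (Equiv.neg _) (fun x => by simp [← hsym]) (fun _ _ => rfl)

lemma circSpectrum_eq {S : Finset (ZMod n)} (hsym : ∀ x : ZMod n, x ∈ S ↔ -x ∈ S) :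
    circSpectrum n S = Finset.univ.val.map fun k => (circEigenvalue S k).re := by
  have hcharpoly : (circAdj n S).charpoly = ∏ k, (X - C (circEigenvalue S k).re) := by
    refine map_injective (algebraMap ℝ ℂ) (RingHom.injective _) ?_
    rw [← charpoly_map, charpoly_circAdj_map]
    simp [Polynomial.map_prod, ofReal_re_circEigenvalue hsym]
  rw [circSpectrum, hcharpoly, Finset.prod_eq_multiset_prod]
  simpa only [Multiset.map_map, Function.comp_def] using
    roots_multiset_prod_X_sub_C (Finset.univ.val.map fun k => (circEigenvalue S k).re)

lemma circEigenvalue_zero (S : Finset (ZMod n)) : circEigenvalue S 0 = S.card := by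
  simp [circEigenvalue]

lemma circEigenvalue_one (S : Finset (ZMod n)) : circEigenvalue S 1 = ∑ j ∈ S, stdAddChar j := by
  simp [circEigenvalue]

lemma circEigenvalue_units (S : Finset (ZMod n)) (u : (ZMod n)ˣ) :
    circEigenvalue S u = ∑ j ∈ u • S, stdAddChar j := by
  rw [Finset.smul_finset_def, Finset.sum_image (MulAction.injective u).injOn]
  rfl

end Spectrum

section Independence

variable {p : ℕ} [NeZero p]

lemma stdAddChar_eq_pow_val (j : ZMod p) :
    (stdAddChar j : ℂ) = stdAddChar (1 : ZMod p) ^ j.val := by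
  rw [← AddChar.map_nsmul_eq_pow, nsmul_one, natCast_zmod_val]

lemma isPrimitiveRoot_stdAddChar_one : IsPrimitiveRoot (stdAddChar (1 : ZMod p) : ℂ) p := by
  rw [← Int.cast_one, stdAddChar_coe]
  convert Complex.isPrimitiveRoot_exp p (NeZero.ne p) using 2
  push_cast
  ring

theorem eq_of_sum_intCast_mul_stdAddChar_eq_zero (hp : p.Prime) {f : ZMod p → ℤ}
    (h : ∑ j, (f j : ℂ) * stdAddChar j = 0) (i j : ZMod p) : f i = f j := by
  let g : ℚ[X] := ∑ k : ZMod p, C (f k : ℚ) * X ^ k.val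
  have hcoeff (k : ZMod p) : g.coeff k.val = f k := by
    simp [g, finsetSum_coeff, coeff_X_pow, ZMod.val_injective p |>.eq_iff]
  have hdeg : g.natDegree < p := by
    have : g.natDegree ≤ p - 1 := natDegree_sum_le_of_forall_le _ _ fun k _ =>
      (natDegree_C_mul_X_pow_le _ _).trans (Nat.le_sub_one_of_lt (val_lt k))
    have := NeZero.pos p
    omega
  have hg : aeval (stdAddChar (1 : ZMod p) : ℂ) g = 0 := by
    simpa [g, ← stdAddChar_eq_pow_val] using h
  have := isPrimitiveRoot_stdAddChar_one.coeff_eq_of_aeval_eq_zero hp hdeg hg (val_lt i) (val_lt j)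
  exact_mod_cast (hcoeff i).symm.trans (this.trans (hcoeff j))

lemma sum_indicator_mul_stdAddChar (T : Finset (ZMod p)) :
    ∑ j, ((if j ∈ T then 1 else 0 : ℤ) : ℂ) * stdAddChar j = ∑ j ∈ T, stdAddChar j := by
  simp [apply_ite, ite_mul, Finset.sum_ite_mem]

lemma eq_of_sum_stdAddChar_eq (hp : p.Prime) {T T' : Finset (ZMod p)} (hT : (0 : ZMod p) ∉ T)
    (hT' : (0 : ZMod p) ∉ T') (h : ∑ j ∈ T, (stdAddChar j : ℂ) = ∑ j ∈ T', stdAddChar j) :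
    T = T' := by
  have hf := eq_of_sum_intCast_mul_stdAddChar_eq_zero hp
    (f := fun j => (if j ∈ T then 1 else 0) - (if j ∈ T' then 1 else 0)) (by
      simp only [Int.cast_sub, sub_mul, Finset.sum_sub_distrib, sum_indicator_mul_stdAddChar, h,
        sub_self])
  ext j
  have := hf j 0
  simp only [hT, hT', if_false] at this
  split_ifs at this <;> simp_all

lemma sum_stdAddChar_ne_neg (hp : p.Prime) {T T' : Finset (ZMod p)} (hT : (0 : ZMod p) ∉ T)
    (hT' : (0 : ZMod p) ∉ T') (hne : T.Nonempty) :
    ∑ j ∈ T, (stdAddChar j : ℂ) ≠ -∑ j ∈ T', stdAddChar j := by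
  intro h
  have hf := eq_of_sum_intCast_mul_stdAddChar_eq_zero hp
    (f := fun j => (if j ∈ T then 1 else 0) + (if j ∈ T' then 1 else 0)) (by
      simp only [Int.cast_add, add_mul, Finset.sum_add_distrib, sum_indicator_mul_stdAddChar, h,
        neg_add_cancel])
  obtain ⟨s, hs⟩ := hne
  have := hf s 0
  simp only [hs, hT, hT', if_false] at this
  split_ifs at this <;> omega

lemma eq_neg_one_of_sum_stdAddChar_eq_intCast (hp : p.Prime) {T : Finset (ZMod p)}
    (hT : (0 : ZMod p) ∉ T) (hne : T.Nonempty) {m : ℤ} (h : ∑ j ∈ T, (stdAddChar j : ℂ) = m) :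
    m = -1 := by
  have hf := eq_of_sum_intCast_mul_stdAddChar_eq_zero hp
    (f := fun j => (if j ∈ T then 1 else 0) - m * (if j = 0 then 1 else 0)) (by
      simp [sub_mul, Finset.sum_sub_distrib, h])
  obtain ⟨s, hs⟩ := hne
  have := hf s 0
  simp only [hs, hT, if_false] at this
  split_ifs at this <;> simp_all

theorem exists_units_smul_eq_of_absNonzeroSpectrum_eq (hp : p.Prime) (hodd : Odd p)
    {SF SH : Finset (ZMod p)} (hsymF : ∀ x : ZMod p, x ∈ SF ↔ -x ∈ SF) (h0F : (0 : ZMod p) ∉ SF)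
    (hsymH : ∀ x : ZMod p, x ∈ SH ↔ -x ∈ SH) (h0H : (0 : ZMod p) ∉ SH) (hSF : SF.Nonempty)
    (hsc : absNonzeroSpectrum p SF = absNonzeroSpectrum p SH) : ∃ u : (ZMod p)ˣ, SF = u • SH := by
  set x := (circEigenvalue SF 1).re
  have hx : (x : ℂ) = ∑ j ∈ SF, stdAddChar j := by
    rw [ofReal_re_circEigenvalue hsymF, circEigenvalue_one]
  have hx0 : x ≠ 0 := fun h => by
    have := eq_neg_one_of_sum_stdAddChar_eq_intCast hp h0F hSF (m := 0) (by simp [← hx, h])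
    omega
  have hmem : |x| ∈ absNonzeroSpectrum p SH := by
    rw [← hsc, absNonzeroSpectrum, circSpectrum_eq hsymF]
    exact Multiset.mem_map_of_mem _
      (Multiset.mem_filter.mpr ⟨Multiset.mem_map_of_mem _ (Finset.mem_univ_val 1), hx0⟩)
  rw [absNonzeroSpectrum, circSpectrum_eq hsymH] at hmem
  obtain ⟨y, hy, hxy⟩ := Multiset.mem_map.mp hmem
  obtain ⟨t, -, rfl⟩ := Multiset.mem_map.mp (Multiset.mem_of_mem_filter hy)
  have hsign := abs_eq_abs.mp hxy.symm
  have : Fact p.Prime := ⟨hp⟩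
  rcases eq_or_ne t 0 with rfl | ht
  · have hcard := ZMod.card_ne_one_of_neg_mem_iff hodd hsymH h0H
    rcases hsign with h | h
    · have := eq_neg_one_of_sum_stdAddChar_eq_intCast hp h0F hSF (m := SH.card)
        (by rw [← hx, h, ofReal_re_circEigenvalue hsymH, circEigenvalue_zero]; push_cast; rfl)
      omega
    · have := eq_neg_one_of_sum_stdAddChar_eq_intCast hp h0F hSF (m := -SH.card)
        (by rw [← hx, h, Complex.ofReal_neg, ofReal_re_circEigenvalue hsymH, circEigenvalue_zero]
            push_cast; rfl)
      omega
  · lift t to (ZMod p)ˣ using isUnit_iff_ne_zero.mpr ht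
    have h0H' := Finset.zero_notMem_smul_finset h0H t
    rcases hsign with h | h
    · refine ⟨t, eq_of_sum_stdAddChar_eq hp h0F h0H' ?_⟩
      rw [← hx, h, ofReal_re_circEigenvalue hsymH, circEigenvalue_units]
    · refine absurd ?_ (sum_stdAddChar_ne_neg hp h0F h0H' hSF)
      rw [← hx, h, Complex.ofReal_neg, ofReal_re_circEigenvalue hsymH, circEigenvalue_units]

end Independence

theorem stmt19 (p : ℕ) [NeZero p] (hp : Nat.Prime p) (hodd : Odd p)
    (SF SH : Finset (ZMod p))
    (hsymF : ∀ x : ZMod p, x ∈ SF ↔ -x ∈ SF) (h0F : (0 : ZMod p) ∉ SF)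
    (hsymH : ∀ x : ZMod p, x ∈ SH ↔ -x ∈ SH) (h0H : (0 : ZMod p) ∉ SH)
    (hsc : absNonzeroSpectrum p SF = absNonzeroSpectrum p SH) :
    Nonempty (circGraph p SF hsymF h0F ≃g circGraph p SH hsymH h0H) := by
  obtain ⟨u, hu⟩ : ∃ u : (ZMod p)ˣ, SF = u • SH := by
    rcases SF.eq_empty_or_nonempty with rfl | hSF
    · rcases SH.eq_empty_or_nonempty with rfl | hSH
      · exact ⟨1, by simp⟩
      · obtain ⟨u, hu⟩ := exists_units_smul_eq_of_absNonzeroSpectrum_eq hp hodd hsymH h0H hsymF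
          h0F hSH hsc.symm
        simp [hu] at hSH
    · exact exists_units_smul_eq_of_absNonzeroSpectrum_eq hp hodd hsymF h0F hsymH h0H hSF hsc
  exact ⟨(circGraphIsoOfEqSmul hsymH h0H hsymF h0F u hu).symm⟩
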